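/- Let N = 6 and Θ₆ = (6,3,2,1). For k ∈ Θ₆ let L_{6,k} = Sp₄(ℚ) ∩ g_k⁻¹ Sp₄(ℤ) g_k where g_k = diag(6, 6k, k, 1). Then the intersection ⋂_{k ∈ Θ₆} L_{6,k} equals the group P₆ of matrices M ∈ Sp₄(ℚ) whose (i,j)-entries satisfy: diagonal entries in ℤ, m₁₂ ∈ 6ℤ, m₁₃ ∈ ℤ, m₁₄ ∈ (1/6)ℤ, m₂₁ ∈ ℤ, m₂₃ ∈ (1/6)ℤ, m₂₄ ∈ (1/6)ℤ, m₃₁ ∈ 6ℤ, m₃₂ ∈ 6ℤ, m₃₄ ∈ ℤ, m₄₁ ∈ 6ℤ, m₄₂ ∈ 36ℤ, m₄₃ ∈ 6ℤ. -/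

import Mathlib

open Matrix

/-- The standard symplectic form over `ℚ`. -/
def J4Q : Matrix (Fin 4) (Fin 4) ℚ :=
  !![0, 0, 1, 0; 0, 0, 0, 1; -1, 0, 0, 0; 0, -1, 0, 0]

/-- The standard symplectic form over `ℤ`. -/
def J4Z : Matrix (Fin 4) (Fin 4) ℤ :=
  !![0, 0, 1, 0; 0, 0, 0, 1; -1, 0, 0, 0; 0, -1, 0, 0]

/-- The diagonal matrix `g_k = diag(6, 6k, k, 1)`. -/
def gSix (k : ℕ) : Matrix (Fin 4) (Fin 4) ℚ :=
  Matrix.diagonal ![(6 : ℚ), 6 * (k : ℚ), (k : ℚ), 1]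

/-- `M ∈ L_{6,k} = Sp₄(ℚ) ∩ g_k⁻¹ Sp₄(ℤ) g_k`, for `M` already symplectic:
`g_k M g_k⁻¹` is an integral symplectic matrix (phrased as `g_k M = A g_k`). -/
def MemL6 (k : ℕ) (M : Matrix (Fin 4) (Fin 4) ℚ) : Prop :=
  ∃ A : Matrix (Fin 4) (Fin 4) ℤ, Aᵀ * J4Z * A = J4Z ∧
    gSix k * M = A.map (Int.cast : ℤ → ℚ) * gSix k

/-!
The diagonal matrix `g_k = diag(d₀, d₁, d₂, d₃) = diag(6, 6k, k, 1)` satisfies `d₀ d₂ = d₁ d₃`, so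
it is a similitude of the symplectic form: `g_kᵀ J g_k = 6k J`. Hence `g_k M g_k⁻¹` is symplectic
whenever `M` is, and `M ∈ L_{6,k}` just says that every entry `(dᵢ / dⱼ) mᵢⱼ` of `g_k M g_k⁻¹` is
an integer. For a fixed entry, the lattices `(dⱼ / dᵢ) ℤ`, `k ∈ Θ₆`, all contain one of them,
`cᵢⱼ ℤ`, which is therefore their intersection; the `cᵢⱼ` are the moduli defining `P₆`.
-/

namespace Matrix

variable {n K : Type*} [Fintype n] [DecidableEq n]

theorem transpose_mul_mul_self_eq_of_similitude [CommRing K] {J g M B : Matrix n n K}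
    {c : K} (hg : IsUnit g.det) (hJ : gᵀ * J * g = c • J) (hM : Mᵀ * J * M = J)
    (hB : g * M = B * g) : Bᵀ * J * B = J := by
  have hconj : gᵀ * (Bᵀ * J * B) * g = gᵀ * J * g := by
    calc gᵀ * (Bᵀ * J * B) * g = (B * g)ᵀ * J * (B * g) := by
          simp only [transpose_mul, Matrix.mul_assoc]
      _ = Mᵀ * (gᵀ * J * g) * M := by
          rw [← hB, transpose_mul]; simp only [Matrix.mul_assoc]
      _ = gᵀ * J * g := by rw [hJ, Matrix.mul_smul, Matrix.smul_mul, hM]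
  have hgT : IsUnit gᵀ := (isUnit_iff_isUnit_det _).mpr (isUnit_det_transpose g hg)
  have hgU : IsUnit g := (isUnit_iff_isUnit_det _).mpr hg
  exact hgT.mul_left_cancel (hgU.mul_right_cancel hconj)

theorem diagonal_mul_eq_mul_diagonal_iff [Field K] {d : n → K} (hd : ∀ i, d i ≠ 0)
    {M B : Matrix n n K} :
    diagonal d * M = B * diagonal d ↔ ∀ i j, B i j = d i / d j * M i j := by
  simp only [← Matrix.ext_iff, diagonal_mul, mul_diagonal]
  refine forall₂_congr fun i j => ?_
  rw [div_mul_eq_mul_div, eq_div_iff (hd j), eq_comm]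

end Matrix

theorem forall_mem_exists_mul_eq_intCast_iff {K ι : Type*} [Field K] {s : Set ι} {r : ι → K}
    {q c : K} (hgen : ∃ k ∈ s, r k * c = 1) (hdvd : ∀ k ∈ s, ∃ m : ℤ, r k * c = m) :
    (∀ k ∈ s, ∃ n : ℤ, r k * q = n) ↔ ∃ n : ℤ, q = c * n := by
  constructor
  · intro h
    obtain ⟨k₀, hk₀, hc⟩ := hgen
    obtain ⟨n, hn⟩ := h k₀ hk₀
    exact ⟨n, by rw [← hn, ← mul_assoc, mul_comm c, hc, one_mul]⟩
  · rintro ⟨n, rfl⟩ k hk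
    obtain ⟨m, hm⟩ := hdvd k hk
    exact ⟨m * n, by rw [← mul_assoc, hm]; push_cast; rfl⟩

def sixWeights (k : ℕ) : Fin 4 → ℚ := ![6, 6 * k, k, 1]

theorem gSix_eq_diagonal (k : ℕ) : gSix k = diagonal (sixWeights k) := rfl

theorem sixWeights_ne_zero {k : ℕ} (hk : k ≠ 0) (i : Fin 4) : sixWeights k i ≠ 0 := by
  fin_cases i <;> simp [sixWeights, hk]

theorem isUnit_det_gSix {k : ℕ} (hk : k ≠ 0) : IsUnit (gSix k).det := by
  rw [gSix_eq_diagonal, det_diagonal, isUnit_iff_ne_zero]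
  exact Finset.prod_ne_zero_iff.mpr fun i _ => sixWeights_ne_zero hk i

theorem gSix_transpose_mul_J4Q_mul_gSix (k : ℕ) :
    (gSix k)ᵀ * J4Q * gSix k = (6 * k : ℚ) • J4Q := by
  ext i j
  simp only [gSix_eq_diagonal, diagonal_transpose, diagonal_mul, mul_diagonal, Matrix.smul_apply]
  fin_cases i <;> fin_cases j <;> simp [J4Q, sixWeights, mul_comm]

theorem J4Z_map_intCast : J4Z.map (Int.cast : ℤ → ℚ) = J4Q := by
  ext i j
  fin_cases i <;> fin_cases j <;> simp [J4Z, J4Q]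

theorem transpose_mul_J4Z_mul_self_of_map {A : Matrix (Fin 4) (Fin 4) ℤ}
    (h : (A.map (Int.cast : ℤ → ℚ))ᵀ * J4Q * A.map (Int.cast : ℤ → ℚ) = J4Q) :
    Aᵀ * J4Z * A = J4Z := by
  apply map_injective (Int.cast_injective (α := ℚ))
  change (Aᵀ * J4Z * A).map (Int.castRingHom ℚ) = J4Z.map (Int.castRingHom ℚ)
  rw [Matrix.map_mul, Matrix.map_mul, transpose_map]
  rw [← J4Z_map_intCast] at h
  exact h

theorem memL6_iff {k : ℕ} (hk : k ≠ 0) {M : Matrix (Fin 4) (Fin 4) ℚ}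
    (hM : Mᵀ * J4Q * M = J4Q) :
    MemL6 k M ↔ ∀ i j, ∃ n : ℤ, sixWeights k i / sixWeights k j * M i j = n := by
  have hconj := fun B => diagonal_mul_eq_mul_diagonal_iff (M := M) (B := B)
    (sixWeights_ne_zero hk)
  constructor
  · rintro ⟨A, -, hA⟩ i j
    rw [gSix_eq_diagonal, hconj] at hA
    exact ⟨A i j, (hA i j).symm⟩
  · intro h
    choose A hA using h
    have hB : gSix k * M = (of A).map (Int.cast : ℤ → ℚ) * gSix k :=
      (hconj _).mpr fun i j => (hA i j).symm
    exact ⟨of A, transpose_mul_J4Z_mul_self_of_map <| transpose_mul_mul_self_eq_of_similitude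
      (isUnit_det_gSix hk) (gSix_transpose_mul_J4Q_mul_gSix k) hM hB, hB⟩

/-- `P₆` is the set of symplectic `M` with `M i j ∈ modulusP6 i j • ℤ` for all `i j`. -/
def modulusP6 : Matrix (Fin 4) (Fin 4) ℚ :=
  !![1, 6, 1, 1/6; 1, 1, 1/6, 1/6; 6, 6, 1, 1; 6, 36, 6, 1]

theorem exists_sixWeights_ratio_mul_modulusP6_eq_one (i j : Fin 4) :
    ∃ k ∈ ([6, 3, 2, 1] : List ℕ), sixWeights k i / sixWeights k j * modulusP6 i j = 1 := by
  fin_cases i <;> fin_cases j <;> norm_num [sixWeights, modulusP6]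

theorem den_sixWeights_ratio_mul_modulusP6_eq_one (i j : Fin 4) :
    ∀ k ∈ ([6, 3, 2, 1] : List ℕ),
      (sixWeights k i / sixWeights k j * modulusP6 i j).den = 1 := by
  fin_cases i <;> fin_cases j <;> norm_num [sixWeights, modulusP6]

theorem forall_exists_int_mul_modulusP6_iff (M : Matrix (Fin 4) (Fin 4) ℚ) :
    (∀ i j, ∃ n : ℤ, M i j = modulusP6 i j * n) ↔
      ((∃ n : ℤ, M 0 0 = n) ∧ (∃ n : ℤ, M 1 1 = n) ∧ (∃ n : ℤ, M 2 2 = n) ∧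
        (∃ n : ℤ, M 3 3 = n) ∧
        (∃ n : ℤ, M 0 1 = 6 * n) ∧
        (∃ n : ℤ, M 0 2 = n) ∧
        (∃ n : ℤ, M 0 3 = (1 / 6 : ℚ) * n) ∧
        (∃ n : ℤ, M 1 0 = n) ∧
        (∃ n : ℤ, M 1 2 = (1 / 6 : ℚ) * n) ∧
        (∃ n : ℤ, M 1 3 = (1 / 6 : ℚ) * n) ∧
        (∃ n : ℤ, M 2 0 = 6 * n) ∧
        (∃ n : ℤ, M 2 1 = 6 * n) ∧
        (∃ n : ℤ, M 2 3 = n) ∧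
        (∃ n : ℤ, M 3 0 = 6 * n) ∧
        (∃ n : ℤ, M 3 1 = 36 * n) ∧
        (∃ n : ℤ, M 3 2 = 6 * n)) := by
  simp only [Fin.forall_fin_succ, IsEmpty.forall_iff, and_true, modulusP6, of_apply, cons_val',
    cons_val_zero, cons_val_succ, empty_val', cons_val_fin_one, one_mul]
  tauto

/-- for `N = 6`, `Θ₆ = (6,3,2,1)`, a symplectic matrix
`M ∈ Sp₄(ℚ)` lies in `⋂_{k ∈ Θ₆} L_{6,k}` iff it lies in `P₆`, i.e. iff its
entries satisfy the stated integrality conditions. -/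
theorem intersection_L6_eq_P6 (M : Matrix (Fin 4) (Fin 4) ℚ)
    (hM : Mᵀ * J4Q * M = J4Q) :
    (∀ k ∈ ([6, 3, 2, 1] : List ℕ), MemL6 k M) ↔
      ((∃ n : ℤ, M 0 0 = n) ∧ (∃ n : ℤ, M 1 1 = n) ∧ (∃ n : ℤ, M 2 2 = n) ∧
        (∃ n : ℤ, M 3 3 = n) ∧
        (∃ n : ℤ, M 0 1 = 6 * n) ∧
        (∃ n : ℤ, M 0 2 = n) ∧
        (∃ n : ℤ, M 0 3 = (1 / 6 : ℚ) * n) ∧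
        (∃ n : ℤ, M 1 0 = n) ∧
        (∃ n : ℤ, M 1 2 = (1 / 6 : ℚ) * n) ∧
        (∃ n : ℤ, M 1 3 = (1 / 6 : ℚ) * n) ∧
        (∃ n : ℤ, M 2 0 = 6 * n) ∧
        (∃ n : ℤ, M 2 1 = 6 * n) ∧
        (∃ n : ℤ, M 2 3 = n) ∧
        (∃ n : ℤ, M 3 0 = 6 * n) ∧
        (∃ n : ℤ, M 3 1 = 36 * n) ∧
        (∃ n : ℤ, M 3 2 = 6 * n)) := by
  have hΘ : ∀ k ∈ ([6, 3, 2, 1] : List ℕ), k ≠ 0 := by decide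
  rw [← forall_exists_int_mul_modulusP6_iff]
  calc (∀ k ∈ ([6, 3, 2, 1] : List ℕ), MemL6 k M)
      ↔ ∀ k ∈ ([6, 3, 2, 1] : List ℕ), ∀ i j, ∃ n : ℤ,
          sixWeights k i / sixWeights k j * M i j = n :=
        forall₂_congr fun k hk => memL6_iff (hΘ k hk) hM
    _ ↔ ∀ i j, ∀ k ∈ ([6, 3, 2, 1] : List ℕ), ∃ n : ℤ,
          sixWeights k i / sixWeights k j * M i j = n :=
        ⟨fun h i j k hk => h k hk i j, fun h k hk i j => h i j k hk⟩
    _ ↔ ∀ i j, ∃ n : ℤ, M i j = modulusP6 i j * n :=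
        forall₂_congr fun i j => forall_mem_exists_mul_eq_intCast_iff
          (s := {k | k ∈ ([6, 3, 2, 1] : List ℕ)})
          (exists_sixWeights_ratio_mul_modulusP6_eq_one i j)
          fun k hk => ⟨_, ((Rat.den_eq_one_iff _).mp
            (den_sixWeights_ratio_mul_modulusP6_eq_one i j k hk)).symm⟩
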